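/- arXiv:1509.03855 — 2 statements merged into one kernel-verified Lean document; each statement's English description precedes it below -/
import Mathlib

section
/- Let X be a graph whose girth is greater than 2Δ + 4, and let Y₁, ..., Y_r be connected subgraphs of X each of diameter less than Δ + 2. Then the intersection Y₁ ∩ ⋯ ∩ Y_r (the subgraph with vertex set the intersection of vertex sets and edge set the intersection of edge sets) is connected, provided it is nonempty. -/
/-- A graph: a symmetric relation on a vertex type (loops allowed). -/
structure SymGraph (V : Type*) where
  adj : V → V → Prop
  symm : ∀ {x y : V}, adj x y → adj y x

variable {V : Type*}

/-- `X` has an embedded cycle of length `n`. -/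
def HasCycle (X : SymGraph V) (n : ℕ) : Prop :=
  ∃ φ : ZMod n → V, Function.Injective φ ∧ ∀ i, X.adj (φ i) (φ (i + 1))

/-- The girth of `X` is greater than `m`: no loops and no embedded cycle of
length at most `m`. -/
def GirthGT (X : SymGraph V) (m : ℕ) : Prop :=
  (∀ v, ¬ X.adj v v) ∧ ∀ n, 3 ≤ n → n ≤ m → ¬ HasCycle X n

/-- A subgraph of a graph `X`. -/
structure Subgraph (X : SymGraph V) where
  verts : Set V
  adj : V → V → Prop
  adj_sub : ∀ {x y}, adj x y → X.adj x y
  edge_vert : ∀ {x y}, adj x y → x ∈ verts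
  symm : ∀ {x y}, adj x y → adj y x

/-- A walk of length `n` inside a subgraph. -/
def Subgraph.Walk {X : SymGraph V} (Y : Subgraph X) (φ : ℕ → V) (n : ℕ) : Prop :=
  (∀ i ≤ n, φ i ∈ Y.verts) ∧ ∀ i < n, Y.adj (φ i) (φ (i + 1))

/-- A subgraph is connected if any two of its vertices are joined by a walk in it. -/
def Subgraph.Connected {X : SymGraph V} (Y : Subgraph X) : Prop :=
  ∀ x ∈ Y.verts, ∀ y ∈ Y.verts,
    ∃ n, ∃ φ : ℕ → V, Y.Walk φ n ∧ φ 0 = x ∧ φ n = y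

/-- The diameter of a subgraph is less than `m`: any two of its vertices are
joined by a walk in it of length less than `m`. -/
def Subgraph.DiamLT {X : SymGraph V} (Y : Subgraph X) (m : ℕ) : Prop :=
  ∀ x ∈ Y.verts, ∀ y ∈ Y.verts,
    ∃ n < m, ∃ φ : ℕ → V, Y.Walk φ n ∧ φ 0 = x ∧ φ n = y

/-!
In a graph of girth greater than `2Δ + 2`, two paths of length at most `Δ + 1` with the same
endpoints coincide: where they first diverge, following one of them until it meets the other
again and returning along the other closes a cycle of length at most `2Δ + 2`. Each `Yⱼ`
contains a path from `x` to `y` of length at most `Δ + 1` (a shortest walk), so all these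
paths are one and the same path, which lies in every `Yⱼ`.
-/

namespace SymGraph

def IsPath (X : SymGraph V) (φ : ℕ → V) (n : ℕ) : Prop :=
  (∀ i < n, X.adj (φ i) (φ (i + 1))) ∧ Set.InjOn φ (Set.Iic n)

variable {X : SymGraph V} {φ ψ c : ℕ → V} {a b k n N : ℕ}

theorem IsPath.mono (h : X.IsPath φ n) (hk : k ≤ n) : X.IsPath φ k :=
  ⟨fun i hi => h.1 i (by omega), h.2.mono (Set.Iic_subset_Iic.2 hk)⟩

theorem IsPath.tail (h : X.IsPath φ (n + 1)) : X.IsPath (fun t => φ (t + 1)) n := by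
  refine ⟨fun i hi => h.1 (i + 1) (by omega), fun u hu v hv huv => ?_⟩
  have : u + 1 = v + 1 :=
    h.2 (show u + 1 ≤ n + 1 by simp only [Set.mem_Iic] at hu; omega)
      (show v + 1 ≤ n + 1 by simp only [Set.mem_Iic] at hv; omega) huv
  omega

theorem hasCycle_of_closed (hN : N ≠ 0) (hadj : ∀ i < N, X.adj (c i) (c (i + 1)))
    (hclosed : c N = c 0) (hinj : Set.InjOn c (Set.Iio N)) : HasCycle X N := by
  have : NeZero N := ⟨hN⟩
  refine ⟨fun z => c z.val, fun z w h => ZMod.val_injective N (hinj z.val_lt w.val_lt h),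
    fun z => ?_⟩
  have hval : (z + 1).val = (z.val + 1) % N := by
    rw [ZMod.val_add, ZMod.val_one_eq_one_mod, Nat.add_mod_mod]
  show X.adj (c z.val) (c (z + 1).val)
  rcases Nat.lt_or_ge (z.val + 1) N with h | h
  · rw [hval, Nat.mod_eq_of_lt h]
    exact hadj _ z.val_lt
  · have hzN : z.val + 1 = N := le_antisymm z.val_lt h
    have hwrap : (z + 1).val = 0 := by rw [hval, hzN, Nat.mod_self]
    have hlast := hadj _ z.val_lt
    rw [hwrap, ← hclosed]
    rwa [hzN] at hlast

theorem hasCycle_add_of_isPath (hφ : X.IsPath φ a) (hψ : X.IsPath ψ b) (hab : a + b ≠ 0)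
    (h0 : φ 0 = ψ 0) (hend : φ a = ψ b)
    (hdisj : ∀ u, 0 < u → u < a → ∀ v ≤ b, φ u ≠ ψ v) : HasCycle X (a + b) := by
  set c : ℕ → V := fun t => if t ≤ a then φ t else ψ (a + b - t)
  have hc_le : ∀ t ≤ a, c t = φ t := fun t ht => if_pos ht
  have hc_ge : ∀ t, a ≤ t → c t = ψ (a + b - t) := by
    intro t ht
    rcases ht.eq_or_lt with rfl | ht
    · rw [hc_le a le_rfl, hend, Nat.add_sub_cancel_left]
    · exact if_neg (by omega)
  have hmixed : ∀ u ≤ a, ∀ v, 0 < v → v < b → φ u ≠ ψ v := by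
    intro u hu v hv0 hvb huv
    rcases Nat.eq_zero_or_pos u with rfl | hu0
    · have : 0 = v := hψ.2 (Nat.zero_le b) hvb.le (h0.symm.trans huv)
      omega
    rcases hu.eq_or_lt with rfl | hua
    · have : b = v := hψ.2 Set.self_mem_Iic hvb.le (hend.symm.trans huv)
      omega
    · exact hdisj u hu0 hua v hvb.le huv
  refine hasCycle_of_closed (c := c) hab (fun t ht => ?_) ?_ ?_
  · rcases Nat.lt_or_ge t a with hta | hta
    · rw [hc_le t hta.le, hc_le (t + 1) hta]
      exact hφ.1 t hta
    · rw [hc_ge t hta, hc_ge (t + 1) (by omega)]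
      have hadj := hψ.1 (a + b - (t + 1)) (by omega)
      rw [show a + b - (t + 1) + 1 = a + b - t by omega] at hadj
      exact X.symm hadj
  · rw [hc_ge _ (Nat.le_add_right a b), hc_le 0 (Nat.zero_le a), h0, Nat.sub_self]
  · intro u hu v hv huv
    simp only [Set.mem_Iio] at hu hv
    rcases le_or_gt u a with hua | hua <;> rcases le_or_gt v a with hva | hva
    · rw [hc_le u hua, hc_le v hva] at huv
      exact hφ.2 hua hva huv
    · rw [hc_le u hua, hc_ge v hva.le] at huv
      exact absurd huv (hmixed u hua _ (by omega) (by omega))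
    · rw [hc_ge u hua.le, hc_le v hva] at huv
      exact absurd huv.symm (hmixed v hva _ (by omega) (by omega))
    · rw [hc_ge u hua.le, hc_ge v hva.le] at huv
      have : a + b - u = a + b - v :=
        hψ.2 (show a + b - u ≤ b by omega) (show a + b - v ≤ b by omega) huv
      omega

theorem exists_hasCycle_of_isPath (hφ : X.IsPath φ a) (hψ : X.IsPath ψ b) (ha : 0 < a)
    (h0 : φ 0 = ψ 0) (hend : φ a = ψ b) (h1 : φ 1 ≠ ψ 1) :
    ∃ N, 3 ≤ N ∧ N ≤ a + b ∧ HasCycle X N := by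
  classical
  have hmeet : ∃ i, 0 < i ∧ i ≤ a ∧ ∃ j ≤ b, φ i = ψ j := ⟨a, ha, le_rfl, b, le_rfl, hend⟩
  obtain ⟨i, ⟨hi0, hia, j, hjb, hij⟩, hmin⟩ :
      ∃ i, (0 < i ∧ i ≤ a ∧ ∃ j ≤ b, φ i = ψ j) ∧
        ∀ u < i, ¬ (0 < u ∧ u ≤ a ∧ ∃ j ≤ b, φ u = ψ j) :=
    ⟨Nat.find hmeet, Nat.find_spec hmeet, fun u hu => Nat.find_min hmeet hu⟩
  have hj0 : 0 < j := by
    rcases Nat.eq_zero_or_pos j with rfl | hj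
    · have : i = 0 := hφ.2 hia (Nat.zero_le a) (hij.trans h0.symm)
      omega
    · exact hj
  have h3 : 3 ≤ i + j := by
    by_contra h
    obtain ⟨rfl, rfl⟩ : i = 1 ∧ j = 1 := by omega
    exact h1 hij
  refine ⟨i + j, h3, by omega,
    hasCycle_add_of_isPath (hφ.mono hia) (hψ.mono hjb) (by omega) h0 hij ?_⟩
  intro u hu0 hui v hv huv
  exact hmin u hui ⟨hu0, by omega, v, by omega, huv⟩

theorem IsPath.eq_of_girthGT {m : ℕ} (hX : GirthGT X m) (hφ : X.IsPath φ a)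
    (hψ : X.IsPath ψ b) (hm : a + b ≤ m) (h0 : φ 0 = ψ 0) (hend : φ a = ψ b) :
    a = b ∧ Set.EqOn φ ψ (Set.Iic a) := by
  induction a generalizing φ ψ b with
  | zero =>
    obtain rfl : b = 0 := hψ.2 Set.self_mem_Iic (Nat.zero_le b) (hend.symm.trans h0)
    refine ⟨rfl, fun i hi => ?_⟩
    obtain rfl : i = 0 := Nat.le_zero.1 hi
    exact h0
  | succ a ih =>
    obtain _ | b := b
    · have : a + 1 = 0 := hφ.2 Set.self_mem_Iic (Nat.zero_le _) (hend.trans h0.symm)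
      omega
    by_cases h1 : φ 1 = ψ 1
    · obtain ⟨rfl, htail⟩ := ih hφ.tail hψ.tail (by omega) h1 hend
      refine ⟨rfl, fun i hi => ?_⟩
      cases i with
      | zero => exact h0
      | succ i => exact htail (show i ≤ a by simp only [Set.mem_Iic] at hi; omega)
    · obtain ⟨N, hN3, hNm, hcyc⟩ := exists_hasCycle_of_isPath hφ hψ a.succ_pos h0 hend h1
      exact (hX.2 N hN3 (hNm.trans hm) hcyc).elim

end SymGraph

namespace Subgraph

variable {X : SymGraph V} {Y : Subgraph X} {φ : ℕ → V} {n : ℕ}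

theorem Walk.isPath (hφ : Y.Walk φ n) (hinj : Set.InjOn φ (Set.Iic n)) : X.IsPath φ n :=
  ⟨fun i hi => Y.adj_sub (hφ.2 i hi), hinj⟩

theorem Walk.exists_shortcut (hφ : Y.Walk φ n) {i k : ℕ} (hik : i < k) (hkn : k ≤ n)
    (heq : φ i = φ k) :
    ∃ ψ : ℕ → V, Y.Walk ψ (n - (k - i)) ∧ ψ 0 = φ 0 ∧ ψ (n - (k - i)) = φ n := by
  refine ⟨fun t => if t < i then φ t else φ (t + (k - i)), ⟨fun t ht => ?_, fun t ht => ?_⟩,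
    ?_, ?_⟩
  · dsimp only
    split_ifs
    exacts [hφ.1 t (by omega), hφ.1 _ (by omega)]
  · dsimp only
    rcases Nat.lt_or_ge (t + 1) i with h | h
    · simp only [if_pos h, if_pos (show t < i by omega)]
      exact hφ.2 t (by omega)
    rcases h.eq_or_lt with h | h
    · rw [if_pos (show t < i by omega), if_neg (show ¬ t + 1 < i by omega),
        show t + 1 + (k - i) = k by omega, ← heq, h]
      exact hφ.2 t (by omega)
    · simp only [if_neg (show ¬ t < i by omega), if_neg (show ¬ t + 1 < i by omega),
        show t + 1 + (k - i) = t + (k - i) + 1 by omega]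
      exact hφ.2 _ (by omega)
  · rcases Nat.eq_zero_or_pos i with rfl | hi
    · simp [heq]
    · simp [hi]
  · simp only [if_neg (show ¬ n - (k - i) < i by omega), show n - (k - i) + (k - i) = n by omega]

theorem Walk.exists_injOn (hφ : Y.Walk φ n) :
    ∃ m ≤ n, ∃ ψ : ℕ → V, Y.Walk ψ m ∧ ψ 0 = φ 0 ∧ ψ m = φ n ∧ Set.InjOn ψ (Set.Iic m) := by
  classical
  have hex : ∃ m, ∃ ψ : ℕ → V, Y.Walk ψ m ∧ ψ 0 = φ 0 ∧ ψ m = φ n := ⟨n, φ, hφ, rfl, rfl⟩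
  obtain ⟨ψ, hψ, hψ0, hψm⟩ := Nat.find_spec hex
  refine ⟨Nat.find hex, Nat.find_min' hex ⟨φ, hφ, rfl, rfl⟩, ψ, hψ, hψ0, hψm, ?_⟩
  have hne : ∀ u v, u < v → v ≤ Nat.find hex → ψ u ≠ ψ v := by
    intro u v huv hv heq
    obtain ⟨ψ', hψ', hψ'0, hψ'm⟩ := hψ.exists_shortcut huv hv heq
    exact Nat.find_min hex (show Nat.find hex - (v - u) < Nat.find hex by omega)
      ⟨ψ', hψ', hψ'0.trans hψ0, hψ'm.trans hψm⟩
  intro u hu v hv huv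
  rcases lt_trichotomy u v with h | h | h
  · exact absurd huv (hne u v h hv)
  · exact h
  · exact absurd huv.symm (hne v u h hu)

theorem DiamLT.exists_walk_injOn {m : ℕ} {x y : V} (h : Y.DiamLT m) (hx : x ∈ Y.verts)
    (hy : y ∈ Y.verts) :
    ∃ k < m, ∃ ψ : ℕ → V, Y.Walk ψ k ∧ ψ 0 = x ∧ ψ k = y ∧ Set.InjOn ψ (Set.Iic k) := by
  obtain ⟨n, hn, φ, hφ, rfl, rfl⟩ := h x hx y hy
  obtain ⟨k, hk, ψ, hψ, hψ0, hψk, hinj⟩ := hφ.exists_injOn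
  exact ⟨k, hk.trans_lt hn, ψ, hψ, hψ0, hψk, hinj⟩

end Subgraph

theorem stmt_1_general (X : SymGraph V) (Δ : ℕ)
    (hgirth : GirthGT X (2 * Δ + 4))
    (r : ℕ) (hr : 0 < r) (Y : Fin r → Subgraph X)
    (hdiam : ∀ j, (Y j).DiamLT (Δ + 2))
    (x : V) (hx : ∀ j, x ∈ (Y j).verts)
    (y : V) (hy : ∀ j, y ∈ (Y j).verts) :
    ∃ n, ∃ φ : ℕ → V, φ 0 = x ∧ φ n = y ∧
      (∀ i ≤ n, ∀ j, φ i ∈ (Y j).verts) ∧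
      (∀ i < n, ∀ j, (Y j).adj (φ i) (φ (i + 1))) := by
  choose m hm ψ hψ hψ0 hψm hinj using fun j => (hdiam j).exists_walk_injOn (hx j) (hy j)
  let j₀ : Fin r := ⟨0, hr⟩
  have hsame : ∀ j, m j₀ = m j ∧ Set.EqOn (ψ j₀) (ψ j) (Set.Iic (m j₀)) := fun j =>
    ((hψ j₀).isPath (hinj j₀)).eq_of_girthGT hgirth ((hψ j).isPath (hinj j))
      (by linarith [hm j₀, hm j]) ((hψ0 j₀).trans (hψ0 j).symm)
      ((hψm j₀).trans (hψm j).symm)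
  refine ⟨m j₀, ψ j₀, hψ0 j₀, hψm j₀, fun i hi j => ?_, fun i hi j => ?_⟩
  · obtain ⟨hmj, heq⟩ := hsame j
    rw [heq hi]
    exact (hψ j).1 i (hmj ▸ hi)
  · obtain ⟨hmj, heq⟩ := hsame j
    rw [heq (show i ≤ m j₀ by omega), heq (show i + 1 ≤ m j₀ by omega)]
    exact (hψ j).2 i (hmj ▸ hi)

/-- If the girth of `X` is greater than `2Δ + 4` and `Y₁, …, Y_r` are connected
subgraphs of `X` of diameter less than `Δ + 2`, then their intersection
(vertexwise and edgewise) is connected: any two vertices of the intersection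
are joined by a walk lying in the intersection. -/
theorem stmt_1 (X : SymGraph V) (Δ : ℕ) (hΔ : 0 < Δ)
    (hgirth : GirthGT X (2 * Δ + 4))
    (r : ℕ) (hr : 0 < r) (Y : Fin r → Subgraph X)
    (hconn : ∀ j, (Y j).Connected) (hdiam : ∀ j, (Y j).DiamLT (Δ + 2))
    (x : V) (hx : ∀ j, x ∈ (Y j).verts)
    (y : V) (hy : ∀ j, y ∈ (Y j).verts) :
    ∃ n, ∃ φ : ℕ → V, φ 0 = x ∧ φ n = y ∧
      (∀ i ≤ n, ∀ j, φ i ∈ (Y j).verts) ∧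
      (∀ i < n, ∀ j, (Y j).adj (φ i) (φ (i + 1))) :=
  stmt_1_general X Δ hgirth r hr Y hdiam x hx y hy
end

section
/- Let G be a graph and e = ⟨v,w⟩ an edge of G such that there is no graph homomorphism L_3 → G ∖ e sending 0 to v and 3 to w. Then the inverse image under the induced map r_{e*} : B(G_e) → B(G) of the element ({v}, {w}) is exactly the five-element chain-like poset { ({v},{0}), ({v,1},{0}), ({1},{0}), ({1},{0,w}), ({1},{w}) }, whose order complex is an interval (contractible 1-dimensional complex). -/
/-- A graph: a symmetric relation on a vertex type (loops allowed). -/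
structure SGraph (V : Type*) where
  adj : V → V → Prop
  symm : ∀ {x y : V}, adj x y → adj y x

variable {V : Type*}

/-- `f` is a graph homomorphism from `G` to `H`. -/
def IsGraphHom {W : Type*} (G : SGraph V) (H : SGraph W) (f : V → W) : Prop :=
  ∀ {x y : V}, G.adj x y → H.adj (f x) (f y)

/-- The path graph `L₃` on vertices `0,1,2,3`. -/
def L3 : SGraph (Fin 4) where
  adj i j := (i : ℕ) + 1 = j ∨ (j : ℕ) + 1 = i
  symm h := h.symm

/-- The graph `G ∖ e` obtained from `G` by deleting the edge `e = ⟨v,w⟩`. -/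
def delEdge (G : SGraph V) (v w : V) : SGraph V where
  adj x y := G.adj x y ∧ ¬ ((x = v ∧ y = w) ∨ (x = w ∧ y = v))
  symm h := ⟨G.symm h.1, fun hc => h.2 (by tauto)⟩

/-- The subdivision `G_e` of `G` at `e = ⟨v,w⟩`: delete `e`, add new vertices
`0 = Sum.inr false` and `1 = Sum.inr true` with edges `⟨0,1⟩, ⟨0,v⟩, ⟨1,w⟩`. -/
def subdiv (G : SGraph V) (v w : V) : SGraph (V ⊕ Bool) where
  adj a b :=
    match a, b with
    | .inl x, .inl y => G.adj x y ∧ ¬ ((x = v ∧ y = w) ∨ (x = w ∧ y = v))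
    | .inl x, .inr c => (c = false ∧ x = v) ∨ (c = true ∧ x = w)
    | .inr c, .inl x => (c = false ∧ x = v) ∨ (c = true ∧ x = w)
    | .inr c, .inr d => c ≠ d
  symm := by
    rintro (x | c) (y | d) h
    · exact ⟨G.symm h.1, fun hc => h.2 (by tauto)⟩
    · exact h
    · exact h
    · exact h.symm

/-- The natural map `r_e : G_e → G`: identity on `V(G)`, `0 ↦ w`, `1 ↦ v`. -/
def retr (v w : V) : V ⊕ Bool → V :=
  Sum.elim id (fun c => if c then v else w)

/-- `p = (σ,τ)` is an element of the box complex `B(H) = Hom(K₂,H)`. -/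
def IsBoxPair {W : Type*} (H : SGraph W) (p : Set W × Set W) : Prop :=
  p.1.Nonempty ∧ p.2.Nonempty ∧ ∀ a ∈ p.1, ∀ b ∈ p.2, H.adj a b

/-- Componentwise inclusion of pairs of sets, i.e. the order of `B(H)`. -/
def pairLE {W : Type*} (p q : Set W × Set W) : Prop :=
  p.1 ⊆ q.1 ∧ p.2 ⊆ q.2

/-! Since `v ≠ w`, the fibres of `r_e` over `v` and `w` are `{v, 1}` and `{0, w}`, so an element
of the preimage of `({v}, {w})` is a pair of nonempty subsets `σ ⊆ {v, 1}`, `τ ⊆ {0, w}`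
spanning a complete bipartite subgraph of `G_e`. Between these two fibres `G_e` has every edge
except `⟨v, w⟩`, which was deleted; so the pairs are exactly those avoiding `v ∈ σ ∧ w ∈ τ`,
and there are five of them. -/

theorem Set.image_eq_singleton_iff_nonempty_subset {α β : Type*} {f : α → β} {s : Set α}
    {b : β} : f '' s = {b} ↔ s.Nonempty ∧ s ⊆ f ⁻¹' {b} := by
  rw [Set.eq_singleton_iff_nonempty_unique_mem, Set.image_nonempty, Set.forall_mem_image]
  rfl

section
variable {α : Type*} {a a' b b' : α}

theorem nonempty_pairs_avoiding_iff (ha : a ≠ a') (hb : b ≠ b') (p : Set α × Set α) :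
    (p.1.Nonempty ∧ p.1 ⊆ {a, a'} ∧ p.2.Nonempty ∧ p.2 ⊆ {b', b} ∧ ¬ (a ∈ p.1 ∧ b ∈ p.2)) ↔
      p ∈ ({({a}, {b'}), ({a, a'}, {b'}), ({a'}, {b'}), ({a'}, {b', b}), ({a'}, {b})} :
        Set (Set α × Set α)) := by
  obtain ⟨σ, τ⟩ := p
  constructor
  · rintro ⟨hσ, hσa, hτ, hτb, hab⟩
    rcases hσ.subset_pair_iff_eq.1 hσa with rfl | rfl | rfl <;>
      rcases hτ.subset_pair_iff_eq.1 hτb with rfl | rfl | rfl <;>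
      simp_all
  · simp only [Set.mem_insert_iff, Set.mem_singleton_iff, Prod.mk.injEq]
    rintro (⟨rfl, rfl⟩ | ⟨rfl, rfl⟩ | ⟨rfl, rfl⟩ | ⟨rfl, rfl⟩ | ⟨rfl, rfl⟩) <;>
      simp [ha, hb, hb.symm]

theorem zigzag_pairwise_ne (ha : a ≠ a') (hb : b ≠ b') :
    List.Pairwise (· ≠ ·) ([({a}, {b'}), ({a, a'}, {b'}), ({a'}, {b'}), ({a'}, {b', b}),
      ({a'}, {b})] : List (Set α × Set α)) := by
  simp [Set.ext_iff, ha, hb, ha.symm, hb.symm]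

end

section
variable {G : SGraph V} {v w : V}

theorem retr_preimage_left (hne : v ≠ w) : retr v w ⁻¹' {v} = {Sum.inl v, Sum.inr true} := by
  ext (x | _ | _) <;> simp [retr, hne.symm]

theorem retr_preimage_right (hne : v ≠ w) : retr v w ⁻¹' {w} = {Sum.inr false, Sum.inl w} := by
  ext (x | _ | _) <;> simp [retr, hne]

theorem subdiv_adj_of_mem_fibers {x y : V ⊕ Bool}
    (hx : x ∈ ({Sum.inl v, Sum.inr true} : Set (V ⊕ Bool)))
    (hy : y ∈ ({Sum.inr false, Sum.inl w} : Set (V ⊕ Bool)))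
    (hxy : ¬ (x = Sum.inl v ∧ y = Sum.inl w)) : (subdiv G v w).adj x y := by
  rcases hx with rfl | rfl <;> rcases hy with rfl | rfl <;> simp_all [subdiv]

theorem subdiv_not_adj_left_right : ¬ (subdiv G v w).adj (Sum.inl v) (Sum.inl w) :=
  fun h => h.2 (Or.inl ⟨rfl, rfl⟩)

theorem isBoxPair_subdiv_fiber_iff (hne : v ≠ w) (p : Set (V ⊕ Bool) × Set (V ⊕ Bool)) :
    (IsBoxPair (subdiv G v w) p ∧ retr v w '' p.1 = {v} ∧ retr v w '' p.2 = {w}) ↔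
      p.1.Nonempty ∧ p.1 ⊆ {Sum.inl v, Sum.inr true} ∧ p.2.Nonempty ∧
        p.2 ⊆ {Sum.inr false, Sum.inl w} ∧ ¬ (Sum.inl v ∈ p.1 ∧ Sum.inl w ∈ p.2) := by
  rw [Set.image_eq_singleton_iff_nonempty_subset, Set.image_eq_singleton_iff_nonempty_subset,
    retr_preimage_left hne, retr_preimage_right hne]
  constructor
  · rintro ⟨⟨-, -, hadj⟩, ⟨hσ, hσv⟩, hτ, hτw⟩
    exact ⟨hσ, hσv, hτ, hτw, fun h => subdiv_not_adj_left_right (hadj _ h.1 _ h.2)⟩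
  · rintro ⟨hσ, hσv, hτ, hτw, hvw⟩
    refine ⟨⟨hσ, hτ, fun x hx y hy => subdiv_adj_of_mem_fibers (hσv hx) (hτw hy) ?_⟩,
      ⟨hσ, hσv⟩, hτ, hτw⟩
    rintro ⟨rfl, rfl⟩
    exact hvw ⟨hx, hy⟩

end

theorem stmt_5_general (G : SGraph V) (v w : V) (hne : v ≠ w) :
    (∀ p : Set (V ⊕ Bool) × Set (V ⊕ Bool),
      (IsBoxPair (subdiv G v w) p ∧
          retr v w '' p.1 = {v} ∧ retr v w '' p.2 = {w}) ↔
        p ∈ ({ ({Sum.inl v}, {Sum.inr false}),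
               ({Sum.inl v, Sum.inr true}, {Sum.inr false}),
               ({Sum.inr true}, {Sum.inr false}),
               ({Sum.inr true}, {Sum.inr false, Sum.inl w}),
               ({Sum.inr true}, {Sum.inl w}) } :
             Set (Set (V ⊕ Bool) × Set (V ⊕ Bool)))) ∧
    pairLE (({Sum.inl v}, {Sum.inr false}) : Set (V ⊕ Bool) × Set (V ⊕ Bool))
      ({Sum.inl v, Sum.inr true}, {Sum.inr false}) ∧
    pairLE (({Sum.inr true}, {Sum.inr false}) : Set (V ⊕ Bool) × Set (V ⊕ Bool))
      ({Sum.inl v, Sum.inr true}, {Sum.inr false}) ∧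
    pairLE (({Sum.inr true}, {Sum.inr false}) : Set (V ⊕ Bool) × Set (V ⊕ Bool))
      ({Sum.inr true}, {Sum.inr false, Sum.inl w}) ∧
    pairLE (({Sum.inr true}, {Sum.inl w}) : Set (V ⊕ Bool) × Set (V ⊕ Bool))
      ({Sum.inr true}, {Sum.inr false, Sum.inl w}) ∧
    List.Pairwise (· ≠ ·)
      ([ ({Sum.inl v}, {Sum.inr false}),
         ({Sum.inl v, Sum.inr true}, {Sum.inr false}),
         ({Sum.inr true}, {Sum.inr false}),
         ({Sum.inr true}, {Sum.inr false, Sum.inl w}),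
         ({Sum.inr true}, {Sum.inl w}) ] :
        List (Set (V ⊕ Bool) × Set (V ⊕ Bool))) := by
  refine ⟨fun p => (isBoxPair_subdiv_fiber_iff hne p).trans
      (nonempty_pairs_avoiding_iff Sum.inl_ne_inr Sum.inl_ne_inr p), ?_, ?_, ?_, ?_,
    zigzag_pairwise_ne Sum.inl_ne_inr Sum.inl_ne_inr⟩ <;>
  simp [pairLE]

/-- The inverse image of `({v},{w})` under `r_{e∗} : B(G_e) → B(G)` is exactly
the five-element poset `{({v},{0}), ({v,1},{0}), ({1},{0}), ({1},{0,w}),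
({1},{w})}`, which forms a zigzag chain (its order complex is an interval). -/
theorem stmt_5 (G : SGraph V) (v w : V) (he : G.adj v w) (hne : v ≠ w)
    (hL : ¬ ∃ f : Fin 4 → V, IsGraphHom L3 (delEdge G v w) f ∧ f 0 = v ∧ f 3 = w) :
    (∀ p : Set (V ⊕ Bool) × Set (V ⊕ Bool),
      (IsBoxPair (subdiv G v w) p ∧
          retr v w '' p.1 = {v} ∧ retr v w '' p.2 = {w}) ↔
        p ∈ ({ ({Sum.inl v}, {Sum.inr false}),
               ({Sum.inl v, Sum.inr true}, {Sum.inr false}),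
               ({Sum.inr true}, {Sum.inr false}),
               ({Sum.inr true}, {Sum.inr false, Sum.inl w}),
               ({Sum.inr true}, {Sum.inl w}) } :
             Set (Set (V ⊕ Bool) × Set (V ⊕ Bool)))) ∧
    pairLE (({Sum.inl v}, {Sum.inr false}) : Set (V ⊕ Bool) × Set (V ⊕ Bool))
      ({Sum.inl v, Sum.inr true}, {Sum.inr false}) ∧
    pairLE (({Sum.inr true}, {Sum.inr false}) : Set (V ⊕ Bool) × Set (V ⊕ Bool))
      ({Sum.inl v, Sum.inr true}, {Sum.inr false}) ∧
    pairLE (({Sum.inr true}, {Sum.inr false}) : Set (V ⊕ Bool) × Set (V ⊕ Bool))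
      ({Sum.inr true}, {Sum.inr false, Sum.inl w}) ∧
    pairLE (({Sum.inr true}, {Sum.inl w}) : Set (V ⊕ Bool) × Set (V ⊕ Bool))
      ({Sum.inr true}, {Sum.inr false, Sum.inl w}) ∧
    List.Pairwise (· ≠ ·)
      ([ ({Sum.inl v}, {Sum.inr false}),
         ({Sum.inl v, Sum.inr true}, {Sum.inr false}),
         ({Sum.inr true}, {Sum.inr false}),
         ({Sum.inr true}, {Sum.inr false, Sum.inl w}),
         ({Sum.inr true}, {Sum.inl w}) ] :
        List (Set (V ⊕ Bool) × Set (V ⊕ Bool))) :=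
  stmt_5_general G v w hne
end
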